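/- Let f : ℝ → ℝ be monotone nondecreasing, let g : [-1,1] → ℝ be continuous, and let h₁, h₂ : [-1,1] → ℝ be four times continuously differentiable functions, both satisfying h''''(y) + f(h(y)) = g(y) for all y ∈ [-1,1] together with the hinged boundary conditions h(±1) = 0, h''(±1) = 0. Then h₁ = h₂ on [-1,1]. -/
import Mathlib

open Set MeasureTheory intervalIntegral

/-- Key lemma: a C⁴ function on ℝ with hinged boundary data on `[-1,1]` and
`w'''' · w ≤ 0` on `[-1,1]` vanishes on `[-1,1]`. -/
lemma beam_aux (w : ℝ → ℝ) (hw : ContDiff ℝ 4 w)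
    (hb1 : w (-1) = 0) (hb2 : w 1 = 0)
    (hb3 : deriv (deriv w) (-1) = 0) (hb4 : deriv (deriv w) 1 = 0)
    (hsign : ∀ y ∈ Set.Icc (-1 : ℝ) 1,
      deriv (deriv (deriv (deriv w))) y * w y ≤ 0) :
    ∀ y ∈ Set.Icc (-1 : ℝ) 1, w y = 0 := by
  set w1 := deriv w with hw1
  set w2 := deriv w1 with hw2
  set w3 := deriv w2 with hw3
  set w4 := deriv w3 with hw4
  -- regularity
  have h4 : ContDiff ℝ ((3 : WithTop ℕ∞) + 1) w := by exact_mod_cast hw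
  have c3 : ContDiff ℝ ((2 : WithTop ℕ∞) + 1) w1 := by
    have := (contDiff_succ_iff_deriv.mp h4).2.2
    exact_mod_cast this
  have c2 : ContDiff ℝ ((1 : WithTop ℕ∞) + 1) w2 := by
    have := (contDiff_succ_iff_deriv.mp c3).2.2
    exact_mod_cast this
  have c1 : ContDiff ℝ ((0 : WithTop ℕ∞) + 1) w3 := by
    have := (contDiff_succ_iff_deriv.mp c2).2.2
    exact_mod_cast this
  have cw4 : Continuous w4 := (contDiff_succ_iff_deriv.mp c1).2.2.continuous
  have dw : Differentiable ℝ w := (contDiff_succ_iff_deriv.mp h4).1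
  have dw1 : Differentiable ℝ w1 := (contDiff_succ_iff_deriv.mp c3).1
  have dw2 : Differentiable ℝ w2 := (contDiff_succ_iff_deriv.mp c2).1
  have dw3 : Differentiable ℝ w3 := (contDiff_succ_iff_deriv.mp c1).1
  have cw : Continuous w := dw.continuous
  have cw1 : Continuous w1 := dw1.continuous
  have cw2 : Continuous w2 := dw2.continuous
  have cw3 : Continuous w3 := dw3.continuous
  have hdw : ∀ x ∈ uIcc (-1 : ℝ) 1, HasDerivAt w (w1 x) x := fun x _ => (dw x).hasDerivAt
  have hdw1 : ∀ x ∈ uIcc (-1 : ℝ) 1, HasDerivAt w1 (w2 x) x := fun x _ => (dw1 x).hasDerivAt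
  have hdw2 : ∀ x ∈ uIcc (-1 : ℝ) 1, HasDerivAt w2 (w3 x) x := fun x _ => (dw2 x).hasDerivAt
  have hdw3 : ∀ x ∈ uIcc (-1 : ℝ) 1, HasDerivAt w3 (w4 x) x := fun x _ => (dw3 x).hasDerivAt
  -- integration by parts, twice
  have ibp1 : ∫ x in (-1 : ℝ)..1, w x * w4 x
      = - ∫ x in (-1 : ℝ)..1, w1 x * w3 x := by
    rw [integral_mul_deriv_eq_deriv_mul hdw hdw3
      (cw1.intervalIntegrable _ _) (cw4.intervalIntegrable _ _)]
    rw [hb1, hb2]; ring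
  have ibp2 : ∫ x in (-1 : ℝ)..1, w1 x * w3 x
      = - ∫ x in (-1 : ℝ)..1, w2 x * w2 x := by
    rw [integral_mul_deriv_eq_deriv_mul hdw1 hdw2
      (cw2.intervalIntegrable _ _) (cw3.intervalIntegrable _ _)]
    have hb3' : w2 (-1) = 0 := hb3
    have hb4' : w2 1 = 0 := hb4
    rw [hb3', hb4']; ring
  have key : ∫ x in (-1 : ℝ)..1, w2 x ^ 2 = ∫ x in (-1 : ℝ)..1, w x * w4 x := by
    rw [ibp1, ibp2, neg_neg]
    congr 1; ext x; ring
  -- the integral of `w2 ^ 2` is zero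
  have hnonpos : ∫ x in (-1 : ℝ)..1, w x * w4 x ≤ 0 := by
    have h0 : 0 ≤ ∫ x in (-1 : ℝ)..1, -(w x * w4 x) := by
      apply intervalIntegral.integral_nonneg (by norm_num)
      intro u hu
      have := hsign u hu
      nlinarith
    rw [intervalIntegral.integral_neg] at h0
    linarith
  have hnonneg : 0 ≤ ∫ x in (-1 : ℝ)..1, w2 x ^ 2 :=
    intervalIntegral.integral_nonneg (by norm_num) (fun u _ => sq_nonneg _)
  have hzero : ∫ x in (-1 : ℝ)..1, w2 x ^ 2 = 0 := le_antisymm (key ▸ hnonpos) hnonneg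
  -- hence w2 = 0 on Ioo
  have hii : ∀ a b : ℝ, IntervalIntegrable (fun x => w2 x ^ 2) volume a b :=
    fun a b => ((cw2.pow 2).intervalIntegrable a b)
  have h2zero : ∀ x ∈ Set.Ioo (-1 : ℝ) 1, w2 x = 0 := by
    intro x hx
    by_contra hne
    have hposx : 0 < w2 x ^ 2 := by positivity
    have hopen : IsOpen {y : ℝ | 0 < w2 y ^ 2} :=
      isOpen_lt continuous_const ((cw2.pow 2))
    obtain ⟨ε, hε, hball⟩ := Metric.isOpen_iff.mp hopen x hposx
    set δ : ℝ := min (ε / 2) (min ((1 - x) / 2) ((x + 1) / 2)) with hδdef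
    have hδpos : 0 < δ := by
      have := hx.1; have := hx.2
      apply lt_min (by linarith) (lt_min (by linarith) (by linarith))
    have hcd : -1 ≤ x - δ ∧ x + δ ≤ 1 ∧ x - δ < x + δ := by
      have hδ1 : δ ≤ (1 - x) / 2 := le_trans (min_le_right _ _) (min_le_left _ _)
      have hδ2 : δ ≤ (x + 1) / 2 := le_trans (min_le_right _ _) (min_le_right _ _)
      refine ⟨by linarith, by linarith, by linarith⟩
    have hmidpos : 0 < ∫ t in (x - δ)..(x + δ), w2 t ^ 2 := by
      apply intervalIntegral_pos_of_pos_on (hii _ _) _ hcd.2.2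
      intro t ht
      apply hball
      have hδε : δ ≤ ε / 2 := min_le_left _ _
      simp only [Metric.mem_ball, Real.dist_eq]
      have := ht.1; have := ht.2
      rw [abs_lt]; constructor <;> linarith
    have hsplit : ∫ t in (-1 : ℝ)..1, w2 t ^ 2
        = (∫ t in (-1 : ℝ)..(x - δ), w2 t ^ 2) + (∫ t in (x - δ)..(x + δ), w2 t ^ 2)
          + ∫ t in (x + δ)..1, w2 t ^ 2 := by
      rw [intervalIntegral.integral_add_adjacent_intervals (hii _ _) (hii _ _),
        intervalIntegral.integral_add_adjacent_intervals (hii _ _) (hii _ _)]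
    have hA : 0 ≤ ∫ t in (-1 : ℝ)..(x - δ), w2 t ^ 2 :=
      intervalIntegral.integral_nonneg hcd.1 (fun u _ => sq_nonneg _)
    have hB : 0 ≤ ∫ t in (x + δ)..1, w2 t ^ 2 :=
      intervalIntegral.integral_nonneg hcd.2.1 (fun u _ => sq_nonneg _)
    rw [hzero] at hsplit
    linarith
  -- extend to the closed interval by continuity
  have h2zero' : ∀ x ∈ Set.Icc (-1 : ℝ) 1, w2 x = 0 := by
    have : Set.EqOn w2 (fun _ => (0 : ℝ)) (closure (Set.Ioo (-1 : ℝ) 1)) :=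
      (Set.EqOn.closure (fun x hx => h2zero x hx) cw2 continuous_const)
    intro x hx
    have := this (by rwa [closure_Ioo (by norm_num : (-1 : ℝ) ≠ 1)])
    exact this
  -- w1 is constant on [-1,1]
  have h1const : ∀ y ∈ Set.Icc (-1 : ℝ) 1, w1 y = w1 (-1) := by
    intro y hy
    have hftc : ∫ t in (-1 : ℝ)..y, w2 t = w1 y - w1 (-1) :=
      intervalIntegral.integral_eq_sub_of_hasDerivAt
        (fun t _ => (dw1 t).hasDerivAt) (cw2.intervalIntegrable _ _)
    have hIcc : uIcc (-1 : ℝ) y ⊆ Set.Icc (-1 : ℝ) 1 := by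
      rw [uIcc_of_le hy.1]
      exact Set.Icc_subset_Icc le_rfl hy.2
    have : ∫ t in (-1 : ℝ)..y, w2 t = 0 := by
      rw [intervalIntegral.integral_congr (g := fun _ => (0 : ℝ))
        (fun t ht => h2zero' t (hIcc ht))]
      simp
    rw [this] at hftc
    linarith
  -- w y = (y + 1) * w1 (-1)
  have hwform : ∀ y ∈ Set.Icc (-1 : ℝ) 1, w y = (y + 1) * w1 (-1) := by
    intro y hy
    have hftc : ∫ t in (-1 : ℝ)..y, w1 t = w y - w (-1) :=
      intervalIntegral.integral_eq_sub_of_hasDerivAt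
        (fun t _ => (dw t).hasDerivAt) (cw1.intervalIntegrable _ _)
    have hIcc : uIcc (-1 : ℝ) y ⊆ Set.Icc (-1 : ℝ) 1 := by
      rw [uIcc_of_le hy.1]
      exact Set.Icc_subset_Icc le_rfl hy.2
    have : ∫ t in (-1 : ℝ)..y, w1 t = (y + 1) * w1 (-1) := by
      rw [intervalIntegral.integral_congr (g := fun _ => w1 (-1))
        (fun t ht => h1const t (hIcc ht))]
      simp [mul_comm]
    rw [this, hb1] at hftc
    linarith
  have hc0 : w1 (-1) = 0 := by
    have := hwform 1 (by norm_num)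
    rw [hb2] at this
    linarith
  intro y hy
  have := hwform y hy
  rw [hc0] at this
  simpa using this

/-- Uniqueness for the hinged beam equation `h'''' + f(h) = g` with `f` monotone
nondecreasing: two solutions coincide on `[-1,1]`. -/
theorem stmt_14 (f : ℝ → ℝ) (hf : Monotone f)
    (g : ℝ → ℝ) (hg : ContinuousOn g (Set.Icc (-1 : ℝ) 1))
    (h₁ h₂ : ℝ → ℝ) (hreg1 : ContDiff ℝ 4 h₁) (hreg2 : ContDiff ℝ 4 h₂)
    (hb11 : h₁ (-1) = 0) (hb12 : h₁ 1 = 0)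
    (hb13 : deriv (deriv h₁) (-1) = 0) (hb14 : deriv (deriv h₁) 1 = 0)
    (hb21 : h₂ (-1) = 0) (hb22 : h₂ 1 = 0)
    (hb23 : deriv (deriv h₂) (-1) = 0) (hb24 : deriv (deriv h₂) 1 = 0)
    (heq1 : ∀ y ∈ Set.Icc (-1 : ℝ) 1,
      deriv (deriv (deriv (deriv h₁))) y + f (h₁ y) = g y)
    (heq2 : ∀ y ∈ Set.Icc (-1 : ℝ) 1,
      deriv (deriv (deriv (deriv h₂))) y + f (h₂ y) = g y) :
    Set.EqOn h₁ h₂ (Set.Icc (-1 : ℝ) 1) := by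
  set w : ℝ → ℝ := fun y => h₁ y - h₂ y with hwdef
  -- differentiability facts for h₁, h₂ and their derivatives
  have h41 : ContDiff ℝ ((3 : WithTop ℕ∞) + 1) h₁ := by exact_mod_cast hreg1
  have h42 : ContDiff ℝ ((3 : WithTop ℕ∞) + 1) h₂ := by exact_mod_cast hreg2
  have d10 : Differentiable ℝ h₁ := (contDiff_succ_iff_deriv.mp h41).1
  have d20 : Differentiable ℝ h₂ := (contDiff_succ_iff_deriv.mp h42).1
  have c31 : ContDiff ℝ ((2 : WithTop ℕ∞) + 1) (deriv h₁) := by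
    exact_mod_cast (contDiff_succ_iff_deriv.mp h41).2.2
  have c32 : ContDiff ℝ ((2 : WithTop ℕ∞) + 1) (deriv h₂) := by
    exact_mod_cast (contDiff_succ_iff_deriv.mp h42).2.2
  have d11 : Differentiable ℝ (deriv h₁) := (contDiff_succ_iff_deriv.mp c31).1
  have d21 : Differentiable ℝ (deriv h₂) := (contDiff_succ_iff_deriv.mp c32).1
  have c21 : ContDiff ℝ ((1 : WithTop ℕ∞) + 1) (deriv (deriv h₁)) := by
    exact_mod_cast (contDiff_succ_iff_deriv.mp c31).2.2
  have c22 : ContDiff ℝ ((1 : WithTop ℕ∞) + 1) (deriv (deriv h₂)) := by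
    exact_mod_cast (contDiff_succ_iff_deriv.mp c32).2.2
  have d12 : Differentiable ℝ (deriv (deriv h₁)) := (contDiff_succ_iff_deriv.mp c21).1
  have d22 : Differentiable ℝ (deriv (deriv h₂)) := (contDiff_succ_iff_deriv.mp c22).1
  have c11 : ContDiff ℝ ((0 : WithTop ℕ∞) + 1) (deriv (deriv (deriv h₁))) := by
    exact_mod_cast (contDiff_succ_iff_deriv.mp c21).2.2
  have c12 : ContDiff ℝ ((0 : WithTop ℕ∞) + 1) (deriv (deriv (deriv h₂))) := by
    exact_mod_cast (contDiff_succ_iff_deriv.mp c22).2.2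
  have d13 : Differentiable ℝ (deriv (deriv (deriv h₁))) := (contDiff_succ_iff_deriv.mp c11).1
  have d23 : Differentiable ℝ (deriv (deriv (deriv h₂))) := (contDiff_succ_iff_deriv.mp c12).1
  -- derivatives of w
  have e1 : deriv w = fun x => deriv h₁ x - deriv h₂ x := by
    funext x
    exact deriv_sub (d10 x) (d20 x)
  have e2 : deriv (deriv w) = fun x => deriv (deriv h₁) x - deriv (deriv h₂) x := by
    funext x
    rw [e1]
    exact deriv_sub (d11 x) (d21 x)
  have e3 : deriv (deriv (deriv w))
      = fun x => deriv (deriv (deriv h₁)) x - deriv (deriv (deriv h₂)) x := by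
    funext x
    rw [e2]
    exact deriv_sub (d12 x) (d22 x)
  have e4 : deriv (deriv (deriv (deriv w)))
      = fun x => deriv (deriv (deriv (deriv h₁))) x - deriv (deriv (deriv (deriv h₂))) x := by
    funext x
    rw [e3]
    exact deriv_sub (d13 x) (d23 x)
  -- apply the key lemma
  have main : ∀ y ∈ Set.Icc (-1 : ℝ) 1, w y = 0 := by
    apply beam_aux w (hreg1.sub hreg2)
    · simp [hwdef, hb11, hb21]
    · simp [hwdef, hb12, hb22]
    · rw [e2]; simp [hb13, hb23]
    · rw [e2]; simp [hb14, hb24]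
    · intro y hy
      have e4y : deriv (deriv (deriv (deriv w))) y
          = deriv (deriv (deriv (deriv h₁))) y - deriv (deriv (deriv (deriv h₂))) y := by
        rw [e4]
      rw [e4y]
      have h1 := heq1 y hy
      have h2 := heq2 y hy
      have hw4 : deriv (deriv (deriv (deriv h₁))) y - deriv (deriv (deriv (deriv h₂))) y
          = -(f (h₁ y) - f (h₂ y)) := by linarith
      rw [hw4]
      rcases le_total (h₁ y) (h₂ y) with h | h
      · have := hf h
        simp only [hwdef]
        nlinarith
      · have := hf h
        simp only [hwdef]
        nlinarith
  intro y hy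
  have := main y hy
  simp only [hwdef] at this
  linarith
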